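/- arXiv:0808.1276 — 2 statements merged into one kernel-verified Lean document; each statement's English description precedes it below -/
import Mathlib

section
/- Let A be an n×n stable matrix (eigenvalues of positive real part), B an n×1 column and C a 1×n row, with φ(x) = C e^{-xA} B. Define R_x = ∫_x^∞ e^{-yA} B C e^{-yA} dy, an n×n matrix. Suppose I + λ R_x is invertible for all x > 0, and set T_λ(x,y) = −λ C e^{-xA}(I + λ R_x)^{-1} e^{-yA} B. Then T_λ solves the Gelfand–Levitan equation T_λ(x,y) + λ φ(x+y) + λ ∫_x^∞ T_λ(x,z) φ(z+y) dz = 0 for 0 < x < y. -/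
open MeasureTheory Matrix NormedSpace Set Filter Asymptotics Topology

/-!
Write `E t = exp (-t • A)`. Since `φ (z + y) = C E z E y B`, the product `T x z * φ (z + y)` is
`-λ C E x (1 + λ R x)⁻¹ (E z B C E z) E y B`, so integrating over `z > x` puts `R x` in the middle,
and the left-hand side of the equation collapses to
`λ C E x (1 - (1 + λ R x)⁻¹ (1 + λ R x)) E y B = 0`.
The analytic input is the entrywise convergence of the integral defining `R x`: on a generalized
eigenvector of `A` for `μ`, `E t` acts as `exp (-t μ)` times a polynomial in `t`, so all entries
of `E t` decay exponentially once the spectrum of `A` lies in the open right half-plane.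
-/

theorem isBigO_cexp_neg_mul_mul_pow_atTop {μ : ℂ} {ε : ℝ} (hε : ε < μ.re) (j : ℕ) :
    (fun t : ℝ => Complex.exp (-t * μ) * (t : ℂ) ^ j) =O[atTop] fun t => Real.exp (-ε * t) := by
  have hexp : (fun t : ℝ => Complex.exp (-t * μ)) =O[atTop] fun t => Real.exp (-μ.re * t) :=
    isBigO_of_le _ fun t => by simp [Complex.norm_exp, mul_comm]
  have hpow : (fun t : ℝ => (t : ℂ) ^ j) =O[atTop] fun t => Real.exp ((μ.re - ε) * t) :=
    (isBigO_of_le _ fun t => by simp).trans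
      (isLittleO_pow_exp_pos_mul_atTop j (sub_pos.2 hε)).isBigO
  refine (hexp.mul hpow).congr_right fun t => ?_
  rw [← Real.exp_add]
  ring_nf

namespace Matrix

theorem mul_apply_fin_one {κ ν R : Type*} [NonUnitalNonAssocSemiring R] (U : Matrix κ (Fin 1) R)
    (V : Matrix (Fin 1) ν R) (a : κ) (b : ν) : (U * V) a b = U a 0 * V 0 b := by
  simp [mul_apply]

theorem integral_mul_mul_apply {α κ ι ι' ν 𝕜 : Type*} [MeasurableSpace α] {μ : Measure α}
    [Fintype ι] [Fintype ι'] [RCLike 𝕜] (P : Matrix κ ι 𝕜) (G : α → Matrix ι ι' 𝕜)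
    (Q : Matrix ι' ν 𝕜) (hG : ∀ i j, Integrable (fun x => G x i j) μ) (a : κ) (b : ν) :
    ∫ x, (P * G x * Q) a b ∂μ = (P * of (fun i j => ∫ x, G x i j ∂μ) * Q) a b := by
  have hPG : ∀ j, Integrable (fun x => (P * G x) a j) μ := fun j =>
    integrable_finsetSum _ fun i _ => (hG i j).const_mul _
  simp only [mul_apply, of_apply] at hPG ⊢
  rw [integral_finsetSum _ fun j _ => (hPG j).mul_const _]
  refine Finset.sum_congr rfl fun j _ => ?_
  rw [integral_mul_const, integral_finsetSum _ fun i _ => (hG i j).const_mul _]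
  simp only [integral_const_mul]

variable {ι : Type*} [Fintype ι] [DecidableEq ι]

theorem exp_add_smul (M : Matrix ι ι ℂ) (s t : ℂ) :
    exp ((s + t) • M) = exp (s • M) * exp (t • M) := by
  rw [add_smul, exp_add_of_commute]
  exact ((Commute.refl M).smul_left s).smul_right t

theorem continuous_exp_smul (M : Matrix ι ι ℂ) : Continuous fun u : ℂ => exp (u • M) := by
  open scoped Matrix.Norms.Operator in
  exact continuous_iff_continuousAt.2 fun u => (hasDerivAt_exp_smul_const M u).continuousAt

theorem exp_smul_eq_cexp_smul_exp_smul_sub (M : Matrix ι ι ℂ) (μ c : ℂ) :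
    exp (c • M) = Complex.exp (c * μ) • exp (c • (M - μ • 1)) := by
  have hsplit : c • M = algebraMap ℂ _ (c * μ) + c • (M - μ • 1) := by
    rw [Algebra.algebraMap_eq_smul_one, smul_sub, smul_smul]
    abel
  have hscalar :
      exp (algebraMap ℂ (Matrix ι ι ℂ) (c * μ)) = algebraMap ℂ _ (Complex.exp (c * μ)) := by
    open scoped Matrix.Norms.Operator in
    exact Complex.exp_eq_exp_ℂ ▸ (algebraMap_exp_comm (c * μ)).symm
  rw [hsplit, exp_add_of_commute _ _ (Algebra.commute_algebraMap_left _ _), hscalar,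
    Algebra.algebraMap_eq_smul_one, smul_one_mul]

theorem exp_smul_mulVec_eq_sum_of_pow_mulVec_eq_zero (N : Matrix ι ι ℂ) {w : ι → ℂ} {K : ℕ}
    (hK : N ^ K *ᵥ w = 0) (c : ℂ) :
    exp (c • N) *ᵥ w = ∑ j ∈ Finset.range K, (c ^ j / j.factorial) • (N ^ j *ᵥ w) := by
  let L : Matrix ι ι ℂ →ₗ[ℂ] ι → ℂ := (LinearMap.applyₗ w).comp toLin'.toLinearMap
  have hseries :
      HasSum (fun j : ℕ => L ((j.factorial : ℂ)⁻¹ • (c • N) ^ j)) (L (exp (c • N))) := by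
    open scoped Matrix.Norms.Operator in
    exact (exp_series_hasSum_exp' (c • N)).map L L.continuous_of_finiteDimensional
  have hterm : ∀ j : ℕ, L ((j.factorial : ℂ)⁻¹ • (c • N) ^ j)
      = (c ^ j / j.factorial) • (N ^ j *ᵥ w) := fun j => by
    simp only [L, LinearMap.comp_apply, LinearMap.applyₗ_apply_apply, LinearEquiv.coe_coe,
      toLin'_apply, smul_pow, smul_smul, smul_mulVec]
    ring_nf
  simp only [hterm] at hseries
  refine hseries.unique (hasSum_sum_of_ne_finset_zero fun j hj => ?_)
  obtain ⟨d, rfl⟩ := Nat.exists_eq_add_of_le (not_lt.mp (Finset.mem_range.not.mp hj))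
  rw [add_comm, pow_add N, ← mulVec_mulVec, hK, mulVec_zero, smul_zero]

theorem isBigO_exp_neg_smul_mulVec_of_mem_maxGenEigenspace (M : Matrix ι ι ℂ) {μ : ℂ}
    {w : ι → ℂ} (hw : w ∈ Module.End.maxGenEigenspace (toLin' M) μ) {ε : ℝ} (hε : ε < μ.re) :
    (fun t : ℝ => exp ((-(t : ℂ)) • M) *ᵥ w) =O[atTop] fun t => Real.exp (-ε * t) := by
  obtain ⟨K, hK⟩ := (Module.End.mem_maxGenEigenspace _ _ _).1 hw
  have hK' : (M - μ • 1) ^ K *ᵥ w = 0 := by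
    rwa [show toLin' M - μ • 1 = toLin' (M - μ • 1) by simp [Module.End.one_eq_id],
      ← toLin'_pow, toLin'_apply] at hK
  have hexpand : ∀ t : ℝ, exp ((-(t : ℂ)) • M) *ᵥ w = ∑ j ∈ Finset.range K,
      (Complex.exp (-t * μ) * (t : ℂ) ^ j) •
        (((-1) ^ j / j.factorial : ℂ) • ((M - μ • 1) ^ j *ᵥ w)) := by
    intro t
    rw [exp_smul_eq_cexp_smul_exp_smul_sub M μ, smul_mulVec,
      exp_smul_mulVec_eq_sum_of_pow_mulVec_eq_zero _ hK', Finset.smul_sum]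
    refine Finset.sum_congr rfl fun j _ => ?_
    rw [smul_smul, smul_smul, neg_pow]
    ring_nf
  refine IsBigO.congr_left ?_ fun t => (hexpand t).symm
  refine IsBigO.fun_sum fun j _ => ?_
  refine ((isBigO_cexp_neg_mul_mul_pow_atTop hε j).smul
    (isBigO_const_const _ one_ne_zero _)).congr_right fun t => ?_
  simp

theorem eventually_isBigO_exp_neg_smul_mulVec {M : Matrix ι ι ℂ}
    (hM : ∀ μ ∈ spectrum ℂ M, 0 < μ.re) (v : ι → ℂ) :
    ∀ᶠ ε in 𝓝 0,
      (fun t : ℝ => exp ((-(t : ℂ)) • M) *ᵥ v) =O[atTop] fun t => Real.exp (-ε * t) := by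
  have hv : v ∈ ⨆ μ, Module.End.maxGenEigenspace (toLin' M) μ := by
    rw [Module.End.iSup_maxGenEigenspace_eq_top]
    exact Submodule.mem_top
  refine Submodule.iSup_induction _ (motive := fun v => ∀ᶠ ε in 𝓝 0,
    (fun t : ℝ => exp ((-(t : ℂ)) • M) *ᵥ v) =O[atTop] fun t => Real.exp (-ε * t)) hv ?_ ?_ ?_
  · intro μ w hw
    rcases eq_or_ne w 0 with rfl | hw0
    · simp [isBigO_zero]
    have hμ : μ ∈ spectrum ℂ M := by
      rw [← spectrum_toLin']
      exact Module.End.hasEigenvalue_iff_mem_spectrum.1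
        ((Module.End.hasUnifEigenvalue_iff_hasUnifEigenvalue_one (by simp)).1
          ((Submodule.ne_bot_iff _).2 ⟨w, hw, hw0⟩))
    filter_upwards [eventually_lt_nhds (hM μ hμ)] with ε hε
    exact isBigO_exp_neg_smul_mulVec_of_mem_maxGenEigenspace M hw hε
  · simp [isBigO_zero]
  · intro v w hv hw
    filter_upwards [hv, hw] with ε hv hw
    simpa only [mulVec_add] using hv.add hw

theorem eventually_isBigO_exp_neg_smul_apply {M : Matrix ι ι ℂ}
    (hM : ∀ μ ∈ spectrum ℂ M, 0 < μ.re) :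
    ∀ᶠ ε in 𝓝 0, ∀ i j,
      (fun t : ℝ => exp ((-(t : ℂ)) • M) i j) =O[atTop] fun t => Real.exp (-ε * t) := by
  refine eventually_all.2 fun i => eventually_all.2 fun j => ?_
  filter_upwards [eventually_isBigO_exp_neg_smul_mulVec hM (Pi.single j 1)] with ε hε
  refine (isBigO_of_le _ fun t => ?_).trans hε
  simpa [mulVec_single_one] using norm_le_pi_norm (exp ((-(t : ℂ)) • M) *ᵥ Pi.single j 1) i

theorem integrableOn_Ioi_exp_neg_smul_mul_mul_exp_neg_smul {M : Matrix ι ι ℂ}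
    (hM : ∀ μ ∈ spectrum ℂ M, 0 < μ.re) (D : Matrix ι ι ℂ) (a : ℝ) (i j : ι) :
    IntegrableOn (fun t : ℝ => (exp ((-(t : ℂ)) • M) * D * exp ((-(t : ℂ)) • M)) i j)
      (Ioi a) := by
  obtain ⟨ε, hO, hε⟩ := (((eventually_isBigO_exp_neg_smul_apply hM).filter_mono
    nhdsWithin_le_nhds).and (self_mem_nhdsWithin (s := Ioi 0))).exists
  have hE : Continuous fun t : ℝ => exp ((-(t : ℂ)) • M) :=
    (continuous_exp_smul M).comp Complex.continuous_ofReal.neg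
  have hdecay : (fun t : ℝ => (exp ((-(t : ℂ)) • M) * D * exp ((-(t : ℂ)) • M)) i j)
      =O[atTop] fun t => Real.exp (-(2 * ε) * t) := by
    simp only [mul_apply]
    refine IsBigO.fun_sum fun l _ =>
      ((IsBigO.fun_sum (g := fun t => Real.exp (-ε * t)) fun k _ => ?_).mul (hO l j)).congr_right
        fun t => by rw [← Real.exp_add]; ring_nf
    exact ((hO i k).const_mul_left (D k l)).congr_left fun t => mul_comm _ _
  refine IntegrableOn.mono_set ?_ Ioi_subset_Ici_self
  exact (((hE.matrix_mul continuous_const).matrix_mul hE).matrix_elem i j).continuousOn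
    |>.locallyIntegrableOn measurableSet_Ici |>.integrableOn_of_isBigO_atTop hdecay
      ⟨Ioi 0, Ioi_mem_atTop 0, exp_neg_integrableOn_Ioi 0 (by positivity)⟩

end Matrix

/-- Let `A` be an `n×n` stable matrix, `B` a column, `C` a row,
`φ(x) = C e^{-xA} B`, and `R_x = ∫_x^∞ e^{-yA} B C e^{-yA} dy` (entrywise).  If
`I + λ R_x` is invertible for all `x > 0` and
`T_λ(x,y) = −λ C e^{-xA} (I + λ R_x)^{-1} e^{-yA} B`, then `T_λ` solves the
Gelfand–Levitan equation
`T_λ(x,y) + λ φ(x+y) + λ ∫_x^∞ T_λ(x,z) φ(z+y) dz = 0` for `0 < x < y`. -/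
theorem stmt13 (n : ℕ) (A : Matrix (Fin n) (Fin n) ℂ)
    (B : Matrix (Fin n) (Fin 1) ℂ) (C : Matrix (Fin 1) (Fin n) ℂ)
    (hA : ∀ μ ∈ spectrum ℂ A, 0 < μ.re)
    (lam : ℂ)
    (φ : ℝ → ℂ) (hφ : ∀ x : ℝ, φ x = (C * exp ((-(x : ℂ)) • A) * B) 0 0)
    (R : ℝ → Matrix (Fin n) (Fin n) ℂ)
    (hR : ∀ x : ℝ, R x = Matrix.of fun i j =>
        ∫ (y : ℝ) in Ioi x,
          (exp ((-(y : ℂ)) • A) * B * C * exp ((-(y : ℂ)) • A)) i j)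
    (hinv : ∀ x : ℝ, 0 < x → IsUnit (1 + lam • R x))
    (T : ℝ → ℝ → ℂ)
    (hT : ∀ x y : ℝ, T x y =
      -lam * (C * exp ((-(x : ℂ)) • A) * (1 + lam • R x)⁻¹ *
              exp ((-(y : ℂ)) • A) * B) 0 0) :
    ∀ x y : ℝ, 0 < x → x < y →
      T x y + lam * φ (x + y) + lam * ∫ (z : ℝ) in Ioi x, T x z * φ (z + y) = 0 := by
  intro x y hx _
  set E : ℝ → Matrix (Fin n) (Fin n) ℂ := fun t => exp ((-(t : ℂ)) • A)
  have hE : ∀ t : ℝ, exp ((-(t : ℂ)) • A) = E t := fun _ => rfl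
  simp only [hE] at hφ hR hT
  have hφ' : ∀ z, φ (z + y) = (C * E z * (E y * B)) 0 0 := fun z => by
    rw [hφ]
    simp only [← hE, Complex.ofReal_add, neg_add, exp_add_smul, Matrix.mul_assoc]
  have hintegral : ∫ z in Ioi x, T x z * φ (z + y)
      = -lam * ((C * E x * (1 + lam • R x)⁻¹) * R x * (E y * B)) 0 0 := by
    have hintegrand : ∀ z, T x z * φ (z + y)
        = -lam * ((C * E x * (1 + lam • R x)⁻¹) * (E z * B * C * E z) * (E y * B)) 0 0 :=
      fun z => by
        rw [hT, hφ', mul_assoc, ← mul_apply_fin_one]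
        simp only [Matrix.mul_assoc]
    simp_rw [hintegrand]
    rw [integral_const_mul, integral_mul_mul_apply _ _ _ fun i j => by
      simpa only [Matrix.mul_assoc] using
        (integrableOn_Ioi_exp_neg_smul_mul_mul_exp_neg_smul hA (B * C) x i j).integrable, hR]
  have hinsert : C * E x * (E y * B)
      = C * E x * (1 + lam • R x)⁻¹ * (1 + lam • R x) * (E y * B) := by
    rw [Matrix.mul_assoc (C * E x) _,
      nonsing_inv_mul _ ((isUnit_iff_isUnit_det _).1 (hinv x hx)), Matrix.mul_one]
  rw [hintegral, hT, hφ', hinsert]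
  simp only [Matrix.mul_add, Matrix.add_mul, Matrix.mul_smul, Matrix.smul_mul, Matrix.mul_one,
    Matrix.add_apply, Matrix.smul_apply, smul_eq_mul, Matrix.mul_assoc]
  ring
end

section
/- With A an n×n stable matrix, B an n×1, C a 1×n, R_x = ∫_x^∞ e^{-yA} B C e^{-yA} dy, and T_λ(x,x) = −λ C e^{-xA}(I + λR_x)^{-1} e^{-xA} B (assuming I + λR_x invertible for all x in an interval), one has T_λ(x,x) = (d/dx) log det(I + λ R_x). -/
open MeasureTheory Matrix NormedSpace Set
open Filter Asymptotics Topology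
open scoped Nat

/-!
Write `E y = exp (-y A)`. On the generalized eigenspace of `A` for `μ`, `E y` acts as
`exp (-y μ)` times a polynomial in `y`, so every entry of `E y` is `O (exp (-δ y))` for any
`0 < δ < min Re (spectrum A)`. Hence the integrand `E y B C E y` of `R` is integrable on every
`(x, ∞)` and `R' x = -E x B C E x`. Jacobi's formula `(det M)' = tr (adj M · M')`, with
`adj M = det M · M⁻¹` and cyclicity of the trace on the rank-one matrix `(E x B) (C E x)`, gives
`(det (1 + λ R))' = -λ (C E x (1 + λ R x)⁻¹ E x B) · det (1 + λ R x)`.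
-/

theorem isBigO_pow_mul_exp_neg_mul_atTop (m : ℕ) {r δ : ℝ} (h : δ < r) :
    (fun y : ℝ => y ^ m * Real.exp (-r * y)) =O[atTop] fun y => Real.exp (-δ * y) := by
  refine ((isLittleO_pow_exp_pos_mul_atTop m (sub_pos.2 h)).isBigO.mul
    (isBigO_refl _ _)).congr_right fun y => ?_
  rw [← Real.exp_add]
  ring_nf

theorem isBigO_cexp_neg_mul_mul_pow {μ : ℂ} {δ : ℝ} (h : δ < μ.re) (m : ℕ) :
    (fun y : ℝ => Complex.exp (-y * μ) * (-y : ℂ) ^ m) =O[atTop]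
      fun y => Real.exp (-δ * y) := by
  refine isBigO_norm_left.mp ((isBigO_pow_mul_exp_neg_mul_atTop m h).norm_left.congr_left
    fun y => ?_)
  simp [Complex.norm_exp, mul_comm]

theorem Matrix.isBigO_mul_apply {α m n p R : Type*} [Fintype n] [NormedRing R] {l : Filter α}
    {f : α → Matrix m n R} {g : α → Matrix n p R} {u v : α → ℝ}
    (hf : ∀ i k, (fun x => f x i k) =O[l] u) (hg : ∀ k j, (fun x => g x k j) =O[l] v)
    (i : m) (j : p) : (fun x => (f x * g x) i j) =O[l] fun x => u x * v x := by
  simp only [mul_apply]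
  exact IsBigO.fun_sum fun k _ => (hf i k).mul (hg k j)

theorem integrableOn_Ioi_of_isBigO_exp_neg {E : Type*} [NormedAddCommGroup E] {f : ℝ → E}
    {a b : ℝ} (hb : 0 < b) (hf : ContinuousOn f (Ici a))
    (ho : f =O[atTop] fun x => Real.exp (-b * x)) : IntegrableOn f (Ioi a) :=
  (hf.locallyIntegrableOn measurableSet_Ici).integrableOn_of_isBigO_atTop ho
    ⟨Ioi b, Ioi_mem_atTop b, exp_neg_integrableOn_Ioi b hb⟩ |>.mono_set Ioi_subset_Ici_self

theorem hasDerivAt_integral_Ioi {E : Type*} [NormedAddCommGroup E] [NormedSpace ℝ E]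
    [CompleteSpace E] {f : ℝ → E} (hf : Continuous f) (hint : ∀ a, IntegrableOn f (Ioi a))
    (x : ℝ) : HasDerivAt (fun u => ∫ y in Ioi u, f y) (-f x) x := by
  have hsplit (u : ℝ) : ∫ y in Ioi u, f y = (∫ y in Ioi x, f y) - ∫ y in x..u, f y := by
    rw [← intervalIntegral.integral_Ioi_sub_Ioi' (hint x) (hint u), sub_sub_cancel]
  exact ((hf.integral_hasStrictDerivAt x x).hasDerivAt.const_sub _).congr_of_eventuallyEq
    (.of_forall hsplit)

section Matrix

variable {ι : Type*} [Fintype ι] [DecidableEq ι]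

theorem exists_pos_lt_re_of_mem_spectrum {A : Matrix ι ι ℂ}
    (hA : ∀ μ ∈ spectrum ℂ A, 0 < μ.re) : ∃ δ : ℝ, 0 < δ ∧ ∀ μ ∈ spectrum ℂ A, δ < μ.re :=
  (eventually_mem_nhdsWithin.and ((eventually_all_finite A.finite_spectrum).2 fun μ hμ =>
    nhdsWithin_le_nhds (gt_mem_nhds (hA μ hμ)))).exists (f := 𝓝[>] (0 : ℝ))

theorem Matrix.exp_smul_one (c : ℂ) : exp (c • (1 : Matrix ι ι ℂ)) = Complex.exp c • 1 := by
  let : NormedRing (Matrix ι ι ℂ) := Matrix.linftyOpNormedRing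
  let : NormedAlgebra ℂ (Matrix ι ι ℂ) := Matrix.linftyOpNormedAlgebra
  rw [← Algebra.algebraMap_eq_smul_one, ← Algebra.algebraMap_eq_smul_one, Complex.exp_eq_exp_ℂ,
    algebraMap_exp_comm]
  rfl

theorem Matrix.exp_smul_mulVec_eq_sum (N : Matrix ι ι ℂ) {v : ι → ℂ} {k : ℕ}
    (hk : N ^ k *ᵥ v = 0) (c : ℂ) :
    exp (c • N) *ᵥ v = ∑ m ∈ Finset.range k, (c ^ m / m !) • (N ^ m *ᵥ v) := by
  let : NormedRing (Matrix ι ι ℂ) := Matrix.linftyOpNormedRing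
  let : NormedAlgebra ℂ (Matrix ι ι ℂ) := Matrix.linftyOpNormedAlgebra
  have hterm (m : ℕ) : ((m !⁻¹ : ℂ) • (c • N) ^ m) *ᵥ v = (c ^ m / m !) • (N ^ m *ᵥ v) := by
    rw [smul_pow, smul_smul, smul_mulVec, div_eq_inv_mul]
  have hseries : HasSum (fun m : ℕ => (c ^ m / m !) • (N ^ m *ᵥ v)) (exp (c • N) *ᵥ v) := by
    have := (exp_series_hasSum_exp' (𝕂 := ℂ) (c • N)).map
      (mulVec.addMonoidHomLeft v) (continuous_id.matrix_mulVec continuous_const)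
    simp only [Function.comp_def, mulVec.addMonoidHomLeft, AddMonoidHom.coe_mk,
      ZeroHom.coe_mk, hterm] at this
    exact this
  refine hseries.unique (hasSum_sum_of_ne_finset_zero fun m hm => ?_)
  obtain ⟨j, rfl⟩ := Nat.exists_eq_add_of_le' (not_lt.1 (Finset.mem_range.not.1 hm))
  rw [pow_add N j k, ← mulVec_mulVec, hk, mulVec_zero, smul_zero]

theorem Matrix.continuous_exp_neg_smul (A : Matrix ι ι ℂ) :
    Continuous fun y : ℝ => exp ((-(y : ℂ)) • A) := by
  let : NormedRing (Matrix ι ι ℂ) := Matrix.linftyOpNormedRing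
  let : NormedAlgebra ℂ (Matrix ι ι ℂ) := Matrix.linftyOpNormedAlgebra
  let : NormedAlgebra ℚ (Matrix ι ι ℂ) := NormedAlgebra.restrictScalars ℚ ℂ _
  fun_prop

theorem isBigO_exp_neg_smul_mulVec_of_pow_sub_smul_mulVec_eq_zero {A : Matrix ι ι ℂ} {μ : ℂ}
    {w : ι → ℂ} {k : ℕ} (hw : (A - μ • 1) ^ k *ᵥ w = 0) {δ : ℝ} (hδ : δ < μ.re) :
    (fun y : ℝ => exp ((-(y : ℂ)) • A) *ᵥ w) =O[atTop] fun y => Real.exp (-δ * y) := by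
  set N := A - μ • 1
  have hexp (y : ℝ) : exp ((-(y : ℂ)) • A) *ᵥ w = ∑ m ∈ Finset.range k,
      (Complex.exp (-y * μ) * (-y : ℂ) ^ m) • ((m ! : ℂ)⁻¹ • (N ^ m *ᵥ w)) := by
    have hcomm : Commute ((-y * μ) • (1 : Matrix ι ι ℂ)) ((-(y : ℂ)) • N) :=
      ((Commute.one_left _).smul_left _).smul_right _
    have hA : (-(y : ℂ)) • A = (-y * μ) • 1 + (-(y : ℂ)) • N := by
      rw [smul_sub, mul_smul, add_sub_cancel]
    rw [hA, exp_add_of_commute _ _ hcomm, exp_smul_one, smul_mul_assoc, one_mul, smul_mulVec,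
      exp_smul_mulVec_eq_sum N hw, Finset.smul_sum]
    refine Finset.sum_congr rfl fun m _ => ?_
    rw [smul_smul, smul_smul, div_eq_mul_inv, mul_assoc]
  simp only [hexp]
  refine IsBigO.fun_sum fun m _ => ?_
  refine ((isBigO_cexp_neg_mul_mul_pow hδ m).smul
    (isBigO_const_const _ one_ne_zero atTop)).congr_right fun y => ?_
  simp

theorem exists_isBigO_exp_neg_smul_mulVec {A : Matrix ι ι ℂ}
    (hA : ∀ μ ∈ spectrum ℂ A, 0 < μ.re) :
    ∃ δ : ℝ, 0 < δ ∧ ∀ v : ι → ℂ,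
      (fun y : ℝ => exp ((-(y : ℂ)) • A) *ᵥ v) =O[atTop] fun y => Real.exp (-δ * y) := by
  obtain ⟨δ, hδ, hδA⟩ := exists_pos_lt_re_of_mem_spectrum hA
  refine ⟨δ, hδ, fun v => ?_⟩
  have hv : v ∈ ⨆ μ, Module.End.maxGenEigenspace (toLin' A) μ := by
    simp [Module.End.iSup_maxGenEigenspace_eq_top]
  induction hv using Submodule.iSup_induction' with
  | zero => simpa only [mulVec_zero] using isBigO_zero _ _
  | add x y _ _ hx hy => simpa only [mulVec_add] using hx.add hy
  | mem μ w hw =>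
    obtain rfl | hw0 := eq_or_ne w 0
    · simpa only [mulVec_zero] using isBigO_zero _ _
    obtain ⟨k, hk⟩ := (Module.End.mem_maxGenEigenspace _ _ _).mp hw
    have hμ : μ ∈ spectrum ℂ A := by
      rw [← spectrum_toLin', ← Module.End.hasEigenvalue_iff_mem_spectrum]
      exact Module.End.hasEigenvalue_of_hasGenEigenvalue (k := k)
        ((Submodule.ne_bot_iff _).2 ⟨w, Module.End.mem_genEigenspace_nat.2 hk, hw0⟩)
    refine isBigO_exp_neg_smul_mulVec_of_pow_sub_smul_mulVec_eq_zero (k := k) ?_ (hδA μ hμ)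
    rwa [← toLinAlgEquiv'_apply, map_pow, map_sub, map_smul, map_one]

theorem exists_isBigO_exp_neg_smul_apply {A : Matrix ι ι ℂ}
    (hA : ∀ μ ∈ spectrum ℂ A, 0 < μ.re) :
    ∃ δ : ℝ, 0 < δ ∧ ∀ i j,
      (fun y : ℝ => exp ((-(y : ℂ)) • A) i j) =O[atTop] fun y => Real.exp (-δ * y) := by
  obtain ⟨δ, hδ, hdecay⟩ := exists_isBigO_exp_neg_smul_mulVec hA
  refine ⟨δ, hδ, fun i j => ?_⟩
  simpa [mulVec_single_one] using isBigO_pi.mp (hdecay (Pi.single j 1)) i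

theorem hasDerivAt_integral_Ioi_exp_mul_mul_mul_exp_apply {κ : Type*} [Fintype κ]
    {A : Matrix ι ι ℂ} (hA : ∀ μ ∈ spectrum ℂ A, 0 < μ.re)
    (B : Matrix ι κ ℂ) (C : Matrix κ ι ℂ) (x : ℝ) (i j : ι) :
    HasDerivAt
      (fun u : ℝ => ∫ y : ℝ in Ioi u, (exp ((-(y : ℂ)) • A) * B * C * exp ((-(y : ℂ)) • A)) i j)
      (-(exp ((-(x : ℂ)) • A) * B * C * exp ((-(x : ℂ)) • A)) i j) x := by
  obtain ⟨δ, hδ, hE⟩ := exists_isBigO_exp_neg_smul_apply hA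
  have hcont : Continuous fun y : ℝ =>
      (exp ((-(y : ℂ)) • A) * B * C * exp ((-(y : ℂ)) • A)) i j := by
    have := continuous_exp_neg_smul A
    fun_prop
  have hO : (fun y : ℝ => (exp ((-(y : ℂ)) • A) * B * C * exp ((-(y : ℂ)) • A)) i j) =O[atTop]
      fun y => Real.exp (-(2 * δ) * y) := by
    have hBC (k l : ι) : (fun _ : ℝ => (B * C) k l) =O[atTop] fun _ => (1 : ℝ) :=
      isBigO_const_const _ one_ne_zero _
    simp only [Matrix.mul_assoc _ B C]
    refine (isBigO_mul_apply (isBigO_mul_apply hE hBC) hE i j).congr_right fun y => ?_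
    rw [mul_one, ← Real.exp_add]
    ring_nf
  exact hasDerivAt_integral_Ioi hcont
    (fun a => integrableOn_Ioi_of_isBigO_exp_neg (by positivity) hcont.continuousOn hO) x

theorem Matrix.sum_det_updateCol_eq_trace_adjugate_mul {R : Type*} [CommRing R]
    (M M' : Matrix ι ι R) :
    ∑ i, (M.updateCol i fun r => M' r i).det = trace (adjugate M * M') := by
  refine Finset.sum_congr rfl fun i _ => ?_
  rw [← cramer_apply, cramer_eq_adjugate_mulVec]
  rfl

theorem Matrix.hasDerivAt_det {𝕜 R : Type*} [NontriviallyNormedField 𝕜] [NormedCommRing R]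
    [NormedAlgebra 𝕜 R] {M : 𝕜 → Matrix ι ι R} {M' : Matrix ι ι R} {x : 𝕜}
    (h : ∀ i j, HasDerivAt (fun u => M u i j) (M' i j) x) :
    HasDerivAt (fun u => (M u).det) (trace (adjugate (M x) * M')) x := by
  rw [← sum_det_updateCol_eq_trace_adjugate_mul]
  simp only [det_apply]
  rw [Finset.sum_comm]
  refine HasDerivAt.fun_sum fun σ _ => ?_
  rw [← Finset.smul_sum]
  refine (HasDerivAt.fun_finsetProd fun i _ => h (σ i) i).const_smul _ |>.congr_deriv ?_
  congr 1
  refine Finset.sum_congr rfl fun i _ => ?_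
  rw [← Finset.prod_erase_mul _ _ (Finset.mem_univ i), updateCol_self, smul_eq_mul]
  congr 1
  exact Finset.prod_congr rfl fun j hj => (updateCol_ne (Finset.ne_of_mem_erase hj)).symm

theorem Matrix.trace_adjugate_mul_col_mul_row {R : Type*} [CommRing R] {M : Matrix ι ι R}
    (hM : IsUnit M) (u : Matrix ι (Fin 1) R) (v : Matrix (Fin 1) ι R) :
    trace (adjugate M * (u * v)) = (v * M⁻¹ * u) 0 0 * M.det := by
  have hadj : adjugate M = M.det • M⁻¹ := by
    rw [inv_def, smul_smul, Ring.mul_inverse_cancel _ ((isUnit_iff_isUnit_det M).mp hM), one_smul]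
  rw [hadj, smul_mul, trace_smul, ← Matrix.mul_assoc, trace_mul_comm, ← Matrix.mul_assoc,
    trace_fin_one, smul_eq_mul, mul_comm]

end Matrix

/-- With `A` an `n×n` stable matrix, `B` a column, `C` a row,
`R_x = ∫_x^∞ e^{-yA} B C e^{-yA} dy`, and
`T_λ(x,x) = −λ C e^{-xA} (I + λR_x)^{-1} e^{-xA} B` (with `I + λR_x` invertible on an
interval), one has `T_λ(x,x) = (d/dx) log det(I + λ R_x)`, i.e. the derivative of
`x ↦ det(I + λ R_x)` at `x` is `T_λ(x,x) · det(I + λ R_x)`. -/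
theorem stmt14 (n : ℕ) (A : Matrix (Fin n) (Fin n) ℂ)
    (B : Matrix (Fin n) (Fin 1) ℂ) (C : Matrix (Fin 1) (Fin n) ℂ)
    (hA : ∀ μ ∈ spectrum ℂ A, 0 < μ.re)
    (lam : ℂ) (a b : ℝ)
    (R : ℝ → Matrix (Fin n) (Fin n) ℂ)
    (hR : ∀ x : ℝ, R x = Matrix.of fun i j =>
        ∫ (y : ℝ) in Ioi x,
          (exp ((-(y : ℂ)) • A) * B * C * exp ((-(y : ℂ)) • A)) i j)
    (hinv : ∀ x ∈ Ioo a b, IsUnit (1 + lam • R x))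
    (Tdiag : ℝ → ℂ)
    (hT : ∀ x : ℝ, Tdiag x =
      -lam * (C * exp ((-(x : ℂ)) • A) * (1 + lam • R x)⁻¹ *
              exp ((-(x : ℂ)) • A) * B) 0 0) :
    ∀ x ∈ Ioo a b,
      HasDerivAt (fun u => (1 + lam • R u).det) (Tdiag x * (1 + lam • R x).det) x := by
  intro x hx
  set E := exp ((-(x : ℂ)) • A)
  have hentry (i j : Fin n) :
      HasDerivAt (fun u => (1 + lam • R u) i j) ((-lam • (E * B * C * E)) i j) x := by
    simp only [hR, Matrix.add_apply, Matrix.smul_apply, of_apply, smul_eq_mul]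
    refine (((hasDerivAt_integral_Ioi_exp_mul_mul_mul_exp_apply hA B C x i j).const_mul lam
      ).const_add _).congr_deriv ?_
    ring
  refine (hasDerivAt_det hentry).congr_deriv ?_
  rw [show E * B * C * E = (E * B) * (C * E) by simp only [Matrix.mul_assoc], Matrix.mul_smul,
    trace_smul, trace_adjugate_mul_col_mul_row (hinv x hx), hT,
    show C * E * (1 + lam • R x)⁻¹ * E * B = C * E * (1 + lam • R x)⁻¹ * (E * B) by
      simp only [Matrix.mul_assoc], smul_eq_mul, mul_assoc]
end
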